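/- arXiv:1703.05343 — 3 statements merged into one kernel-verified Lean document; each statement's English description precedes it below -/
import Mathlib

section
/- Let R be a commutative ring and N ≥ 1. Let P = R[T_1, …, T_N] be the polynomial ring and Q = R[T_1^{±1}, …, T_N^{±1}] the Laurent polynomial ring, and let e_1, …, e_{N−1} be the elementary symmetric polynomials in T_1, …, T_N. Then the intersection of the ideal of Q generated by e_1, …, e_{N−1} with the subring P equals the ideal of P generated by e_1, …, e_{N−1}. -/
/-!
Since `Q = P[(T_1 ⋯ T_N)⁻¹]`, it suffices that each variable is a nonzerodivisor modulo
`J = (e_1, …, e_{N-1})`. By induction on `n`, `e_1, …, e_n` is a regular sequence in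
`R[T_0, …, T_{n-1}]`: with one more variable, killing `T_0` sends each `e_k` to the `e_k` of the
remaining variables, so `T_0, e_1, …, e_m` is regular. All these elements are homogeneous and `T_0`
has positive degree, which lets `T_0` move to the end of the sequence one step at a time (if `x, y`
is regular modulo a homogeneous ideal and `x` is homogeneous of positive degree, then so is `y, x`).
Hence `T_0`, and by symmetry every `T_i`, is a nonzerodivisor modulo `(e_1, …, e_m)` for `m ≤ n`;
this gives the theorem and, through `e_{n+1} = T_0 ⋯ T_n`, the induction step.
-/

section RegularModuloIdeal

variable {A : Type*} [CommRing A]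

theorem Ideal.mem_sup_span_singleton {I : Ideal A} {f y : A} :
    f ∈ I ⊔ Ideal.span {y} ↔ ∃ a, f - a * y ∈ I := by
  rw [sup_comm, Ideal.mem_span_singleton_sup]
  constructor
  · rintro ⟨a, b, hb, rfl⟩
    exact ⟨a, by simpa using hb⟩
  · rintro ⟨a, ha⟩
    exact ⟨a, f - a * y, ha, by ring⟩

theorem isSMulRegular_quotient_sup_span_singleton_swap {I : Ideal A} {x y : A}
    (hx : IsSMulRegular (A ⧸ I) x) (hy : IsSMulRegular (A ⧸ (I ⊔ Ideal.span {x})) y) :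
    IsSMulRegular (A ⧸ (I ⊔ Ideal.span {y})) x := by
  rw [isSMulRegular_quotient_iff_mem_of_smul_mem] at hx hy ⊢
  intro f hf
  obtain ⟨g, hg⟩ := Ideal.mem_sup_span_singleton.1 hf
  have hyg : y * g ∈ I ⊔ Ideal.span {x} :=
    Ideal.mem_sup_span_singleton.2 ⟨f, by
      rw [show y * g - f * x = -(x • f - g * y) by rw [smul_eq_mul]; ring]
      exact I.neg_mem hg⟩
  obtain ⟨t, ht⟩ := Ideal.mem_sup_span_singleton.1 (hy g hyg)
  refine Ideal.mem_sup_span_singleton.2 ⟨t, hx _ ?_⟩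
  have : x • (f - t * y) = (x • f - g * y) + y * (g - t * x) := by
    simp only [smul_eq_mul]; ring
  rw [this]
  exact I.add_mem hg (I.mul_mem_left y ht)

theorem IsLocalization.comap_map_eq_of_isSMulRegular {S : Type*} [CommRing S] [Algebra A S]
    (M : Submonoid A) [IsLocalization M S] {I : Ideal A}
    (hM : ∀ m ∈ M, IsSMulRegular (A ⧸ I) m) :
    (I.map (algebraMap A S)).comap (algebraMap A S) = I := by
  refine le_antisymm (fun a ha => ?_) Ideal.le_comap_map
  rw [Ideal.mem_comap, IsLocalization.mem_map_algebraMap_iff M S] at ha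
  obtain ⟨⟨b, s⟩, h⟩ := ha
  replace h : algebraMap A S (s * a) = algebraMap A S b := by
    simpa only [← map_mul, mul_comm] using h
  obtain ⟨c, hc⟩ := (IsLocalization.eq_iff_exists M S).1 h
  have : ((c * s : M) : A) • a ∈ I := by
    rw [Submonoid.coe_mul, smul_eq_mul, mul_assoc, hc]
    exact I.mul_mem_left c b.2
  exact mem_of_isSMulRegular_quotient_of_smul_mem (hM _ (c * s).2) this

theorem isSMulRegular_quotient_sup_ker {B F : Type*} [CommRing B] [FunLike F A B]
    [RingHomClass F A B] {φ : F} (hφ : Function.Surjective φ) {I : Ideal A} {x : A}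
    (h : IsSMulRegular (B ⧸ I.map φ) (φ x)) :
    IsSMulRegular (A ⧸ (I ⊔ RingHom.ker φ)) x := by
  rw [isSMulRegular_quotient_iff_mem_of_smul_mem] at h ⊢
  intro f hf
  rw [← Ideal.comap_map_of_surjective' φ hφ] at hf ⊢
  rw [Ideal.mem_comap, smul_eq_mul, map_mul] at hf
  exact h _ hf

end RegularModuloIdeal

theorem IsSMulRegular.prod {ι R M : Type*} [CommMonoid R] [MulAction R M] (s : Finset ι)
    {f : ι → R} (h : ∀ i ∈ s, IsSMulRegular M (f i)) : IsSMulRegular M (∏ i ∈ s, f i) :=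
  Finset.prod_induction _ _ (fun _ _ => IsSMulRegular.mul) (IsSMulRegular.one _) h

section Graded

variable {A σ : Type*} [CommRing A] [SetLike σ A] [AddSubgroupClass σ A] {𝒜 : ℕ → σ}
  [GradedRing 𝒜]

open DirectSum in
theorem Ideal.IsHomogeneous.mem_of_forall_mem_sup_span_pow {I : Ideal A}
    (hI : I.IsHomogeneous 𝒜) {x : A} {e : ℕ} (hx : x ∈ 𝒜 e) (he : 0 < e) {f : A}
    (hf : ∀ k, f ∈ I ⊔ Ideal.span {x ^ k}) : f ∈ I := by
  refine (hI.mem_iff 𝒜).2 fun d => ?_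
  obtain ⟨t, ht⟩ := Ideal.mem_sup_span_singleton.1 (hf (d + 1))
  have hlow : (decompose 𝒜 (t * x ^ (d + 1)) d : A) = 0 :=
    coe_decompose_mul_of_right_mem_of_not_le 𝒜 (SetLike.pow_mem_graded _ hx)
      (by rw [smul_eq_mul]; nlinarith)
  have := hI d ht
  rwa [decompose_sub, DirectSum.sub_apply, AddSubgroupClass.coe_sub, hlow, sub_zero] at this

theorem Ideal.IsHomogeneous.isSMulRegular_quotient_of_sup_span_singleton {I : Ideal A}
    (hI : I.IsHomogeneous 𝒜) {x y : A} {e : ℕ} (hxe : x ∈ 𝒜 e) (he : 0 < e)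
    (hx : IsSMulRegular (A ⧸ I) x) (hy : IsSMulRegular (A ⧸ (I ⊔ Ideal.span {x})) y) :
    IsSMulRegular (A ⧸ I) y := by
  rw [isSMulRegular_quotient_iff_mem_of_smul_mem] at hx hy ⊢
  intro g hg
  have approx : ∀ k, ∃ t, y * t ∈ I ∧ g - t * x ^ k ∈ I := by
    intro k
    induction k with
    | zero => exact ⟨g, hg, by simp⟩
    | succ k ih =>
      obtain ⟨t, hyt, hgt⟩ := ih
      obtain ⟨a, ha⟩ := Ideal.mem_sup_span_singleton.1 (hy t (Ideal.mem_sup_left hyt))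
      have hya : y * a ∈ I := hx _ <| by
        have : x • (y * a) = y * t - y * (t - a * x) := by rw [smul_eq_mul]; ring
        rw [this]
        exact I.sub_mem hyt (I.mul_mem_left y ha)
      refine ⟨a, hya, ?_⟩
      have : g - a * x ^ (k + 1) = (g - t * x ^ k) + x ^ k * (t - a * x) := by ring
      rw [this]
      exact I.add_mem hgt (I.mul_mem_left _ ha)
  exact hI.mem_of_forall_mem_sup_span_pow hxe he fun k =>
    let ⟨t, _, ht⟩ := approx k
    Ideal.mem_sup_span_singleton.2 ⟨t, ht⟩

end Graded

theorem Multiset.esymm_zero_cons {R : Type*} [CommRing R] (s : Multiset R) (k : ℕ) :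
    (0 ::ₘ s).esymm k = s.esymm k := by
  cases k with
  | zero => simp [Multiset.esymm]
  | succ k => simp [Multiset.esymm, Multiset.powersetCard_cons]

namespace MvPolynomial

variable {R : Type*} [CommRing R]

attribute [local instance] gradedAlgebra

theorem isHomogeneous_esymm (σ : Type*) [Fintype σ] (k : ℕ) :
    (esymm σ R k).IsHomogeneous k := by
  refine IsHomogeneous.sum _ _ _ fun t ht => ?_
  simpa [(Finset.mem_powersetCard.1 ht).2] using
    IsHomogeneous.prod t (fun i => (X i : MvPolynomial σ R)) (fun _ => 1)
      fun i _ => isHomogeneous_X R i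

theorem esymm_card (σ : Type*) [Fintype σ] :
    esymm σ R (Fintype.card σ) = ∏ i, X i := by
  simp [esymm, ← Finset.card_univ, Finset.powersetCard_self]

theorem killCompl_X_of_notMem {σ τ : Type*} {f : σ → τ} (hf : Function.Injective f) {i : τ}
    (hi : i ∉ Set.range f) : killCompl (R := R) hf (X i) = 0 := by
  simp [killCompl, hi]

theorem sub_rename_killCompl_mem {σ τ : Type*} {f : σ → τ} (hf : Function.Injective f)
    (p : MvPolynomial τ R) :
    p - rename f (killCompl hf p) ∈ Ideal.span (X '' (Set.range f)ᶜ) := by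
  induction p using MvPolynomial.induction_on with
  | C a => simp
  | add p q hp hq =>
    rw [map_add, map_add, add_sub_add_comm]
    exact Ideal.add_mem _ hp hq
  | mul_X p i hp =>
    by_cases hi : i ∈ Set.range f
    · obtain ⟨j, rfl⟩ := hi
      rw [map_mul, ← rename_X f j, killCompl_rename_app, map_mul, ← sub_mul]
      exact Ideal.mul_mem_right _ _ hp
    · rw [map_mul, killCompl_X_of_notMem hf hi, mul_zero, map_zero, sub_zero]
      exact Ideal.mul_mem_left _ _ (Ideal.subset_span ⟨i, hi, rfl⟩)

theorem ker_killCompl {σ τ : Type*} {f : σ → τ} (hf : Function.Injective f) :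
    RingHom.ker (killCompl (R := R) hf) = Ideal.span (X '' (Set.range f)ᶜ) := by
  refine le_antisymm (fun p hp => ?_) (Ideal.span_le.2 ?_)
  · simpa [(RingHom.mem_ker).1 hp] using sub_rename_killCompl_mem hf p
  · rintro _ ⟨i, hi, rfl⟩
    exact killCompl_X_of_notMem hf hi

theorem ker_killCompl_succ (n : ℕ) :
    RingHom.ker (killCompl (R := R) (Fin.succ_injective n)) =
      Ideal.span {(X 0 : MvPolynomial (Fin (n + 1)) R)} := by
  rw [ker_killCompl, Fin.range_succ, compl_compl, Set.image_singleton]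

theorem killCompl_succ_esymm (n k : ℕ) :
    killCompl (Fin.succ_injective n) (esymm (Fin (n + 1)) R k) = esymm (Fin n) R k := by
  have hzero : killCompl (R := R) (Fin.succ_injective n) (X 0) = 0 :=
    killCompl_X_of_notMem _ (by simp)
  have hsucc (i : Fin n) :
      killCompl (Fin.succ_injective n) (X i.succ) = (X i : MvPolynomial (Fin n) R) := by
    rw [← rename_X, killCompl_rename_app]
  rw [aeval_unique (killCompl (R := R) (Fin.succ_injective n)), aeval_esymm_eq_multiset_esymm,
    esymm_eq_multiset_esymm, Fin.univ_succ, Finset.cons_val, Multiset.map_cons, Finset.map_val,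
    Multiset.map_map]
  simp only [Function.comp_apply, Function.Embedding.coeFn_mk, hzero, hsucc,
    Multiset.esymm_zero_cons]

noncomputable def esymmIdeal (σ R : Type*) [CommRing R] [Fintype σ] (k : ℕ) :
    Ideal (MvPolynomial σ R) :=
  Ideal.span (esymm σ R '' Set.Icc 1 k)

section esymmIdeal

variable {σ : Type*} [Fintype σ]

theorem esymmIdeal_zero : esymmIdeal σ R 0 = ⊥ := by
  simp [esymmIdeal]

theorem esymmIdeal_succ (k : ℕ) :
    esymmIdeal σ R (k + 1) = esymmIdeal σ R k ⊔ Ideal.span {esymm σ R (k + 1)} := by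
  have : Set.Icc 1 (k + 1) = insert (k + 1) (Set.Icc 1 k) := by
    ext j
    simp only [Set.mem_Icc, Set.mem_insert_iff]
    omega
  rw [esymmIdeal, this, Set.image_insert_eq, Ideal.span_insert, sup_comm, esymmIdeal]

theorem isHomogeneous_esymmIdeal (k : ℕ) :
    (esymmIdeal σ R k).IsHomogeneous (homogeneousSubmodule σ R) :=
  Ideal.homogeneous_span _ _ <| by
    rintro _ ⟨j, -, rfl⟩
    exact ⟨j, (mem_homogeneousSubmodule _ _).2 (isHomogeneous_esymm σ j)⟩

theorem esymmIdeal_le_comap_rename (e : σ ≃ σ) (k : ℕ) :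
    esymmIdeal σ R k ≤ (esymmIdeal σ R k).comap (rename e) :=
  Ideal.span_le.2 <| by
    rintro _ ⟨j, hj, rfl⟩
    rw [SetLike.mem_coe, Ideal.mem_comap, rename_esymm]
    exact Ideal.subset_span ⟨j, hj, rfl⟩

theorem map_killCompl_succ_esymmIdeal (n k : ℕ) :
    (esymmIdeal (Fin (n + 1)) R k).map (killCompl (Fin.succ_injective n)) =
      esymmIdeal (Fin n) R k := by
  simp only [esymmIdeal, Ideal.map_span, Set.image_image, killCompl_succ_esymm]

end esymmIdeal

section RegularSequence

theorem isSMulRegular_X_of_isSMulRegular_X {σ : Type*} [Fintype σ] [DecidableEq σ] {k : ℕ}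
    {i : σ} (h : IsSMulRegular (MvPolynomial σ R ⧸ esymmIdeal σ R k) (X i : MvPolynomial σ R))
    (j : σ) :
    IsSMulRegular (MvPolynomial σ R ⧸ esymmIdeal σ R k) (X j : MvPolynomial σ R) := by
  rw [isSMulRegular_quotient_iff_mem_of_smul_mem] at h ⊢
  have hswap := esymmIdeal_le_comap_rename (R := R) (Equiv.swap i j) k
  intro f hf
  have : rename (Equiv.swap i j) f ∈ esymmIdeal σ R k := h _ (by simpa using hswap hf)
  have hinv : ⇑(Equiv.swap i j) ∘ ⇑(Equiv.swap i j) = id :=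
    _root_.funext (Equiv.swap_apply_self i j)
  simpa [rename_rename, hinv, rename_id_apply] using hswap this

theorem isSMulRegular_esymm_quotient_sup_span_X_zero {n k : ℕ}
    (h : IsSMulRegular (MvPolynomial (Fin n) R ⧸ esymmIdeal (Fin n) R k)
      (esymm (Fin n) R (k + 1))) :
    IsSMulRegular
      (MvPolynomial (Fin (n + 1)) R ⧸ (esymmIdeal (Fin (n + 1)) R k ⊔ Ideal.span {X 0}))
      (esymm (Fin (n + 1)) R (k + 1)) := by
  rw [← ker_killCompl_succ]
  refine isSMulRegular_quotient_sup_ker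
    (fun p => ⟨rename Fin.succ p, killCompl_rename_app _ p⟩) ?_
  rwa [map_killCompl_succ_esymmIdeal, killCompl_succ_esymm]

theorem isSMulRegular_X_zero_quotient_esymmIdeal {n : ℕ}
    (h : ∀ k < n, IsSMulRegular (MvPolynomial (Fin n) R ⧸ esymmIdeal (Fin n) R k)
      (esymm (Fin n) R (k + 1))) :
    ∀ m ≤ n, IsSMulRegular (MvPolynomial (Fin (n + 1)) R ⧸ esymmIdeal (Fin (n + 1)) R m)
      (X 0 : MvPolynomial (Fin (n + 1)) R)
  | 0, _ => by
    rw [esymmIdeal_zero, isSMulRegular_quotient_iff_mem_of_smul_mem]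
    intro f hf
    rw [Ideal.mem_bot] at hf ⊢
    simpa using hf
  | m + 1, hm => by
    rw [esymmIdeal_succ]
    exact isSMulRegular_quotient_sup_span_singleton_swap
      (isSMulRegular_X_zero_quotient_esymmIdeal h m (by omega))
      (isSMulRegular_esymm_quotient_sup_span_X_zero (h m hm))

theorem isSMulRegular_esymm_quotient_esymmIdeal :
    ∀ n, ∀ k < n, IsSMulRegular (MvPolynomial (Fin n) R ⧸ esymmIdeal (Fin n) R k)
      (esymm (Fin n) R (k + 1))
  | 0, k, hk => absurd hk k.not_lt_zero
  | n + 1, k, hk => by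
    have ih := isSMulRegular_esymm_quotient_esymmIdeal n
    rcases Nat.lt_or_ge k n with hkn | hkn
    · exact (isHomogeneous_esymmIdeal k).isSMulRegular_quotient_of_sup_span_singleton
        ((mem_homogeneousSubmodule _ _).2 (isHomogeneous_X R 0)) one_pos
        (isSMulRegular_X_zero_quotient_esymmIdeal ih k hkn.le)
        (isSMulRegular_esymm_quotient_sup_span_X_zero (ih k hkn))
    · obtain rfl : k = n := by omega
      have hX0 := isSMulRegular_X_zero_quotient_esymmIdeal ih k le_rfl
      have hprod : esymm (Fin (k + 1)) R (k + 1) = ∏ i, X i := by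
        simpa using esymm_card (R := R) (Fin (k + 1))
      rw [hprod]
      exact IsSMulRegular.prod _ fun i _ => isSMulRegular_X_of_isSMulRegular_X hX0 i

theorem isSMulRegular_X_quotient_esymmIdeal_sub_one {N : ℕ} (i : Fin N) :
    IsSMulRegular (MvPolynomial (Fin N) R ⧸ esymmIdeal (Fin N) R (N - 1))
      (X i : MvPolynomial (Fin N) R) := by
  obtain ⟨n, rfl⟩ := Nat.exists_eq_add_one_of_ne_zero i.pos.ne'
  exact isSMulRegular_X_of_isSMulRegular_X
    (isSMulRegular_X_zero_quotient_esymmIdeal (isSMulRegular_esymm_quotient_esymmIdeal n) n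
      le_rfl) i

end RegularSequence

end MvPolynomial

theorem stmt6_general (R : Type*) [CommRing R] (N : ℕ) :
    Ideal.comap
        (algebraMap (MvPolynomial (Fin N) R)
          (Localization (Submonoid.powers
            (∏ i : Fin N, (MvPolynomial.X i : MvPolynomial (Fin N) R)))))
        (Ideal.map
          (algebraMap (MvPolynomial (Fin N) R)
            (Localization (Submonoid.powers
              (∏ i : Fin N, (MvPolynomial.X i : MvPolynomial (Fin N) R)))))
          (Ideal.span ((fun k => MvPolynomial.esymm (Fin N) R k) '' Set.Icc 1 (N - 1)))) =
      Ideal.span ((fun k => MvPolynomial.esymm (Fin N) R k) '' Set.Icc 1 (N - 1)) := by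
  refine IsLocalization.comap_map_eq_of_isSMulRegular
    (I := MvPolynomial.esymmIdeal (Fin N) R (N - 1)) (Submonoid.powers (∏ i, MvPolynomial.X i)) ?_
  rintro _ ⟨k, rfl⟩
  exact (IsSMulRegular.prod _ fun i _ =>
    MvPolynomial.isSMulRegular_X_quotient_esymmIdeal_sub_one i).pow k

/-- the intersection with the polynomial subring of the ideal of the
Laurent polynomial ring generated by `e_1, …, e_{N−1}` is the ideal of the
polynomial ring generated by `e_1, …, e_{N−1}`. The Laurent polynomial ring is
realised as the localization at the powers of `T_1 ⋯ T_N`. -/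
theorem stmt6 (R : Type*) [CommRing R] (N : ℕ) (hN : 1 ≤ N) :
    Ideal.comap
        (algebraMap (MvPolynomial (Fin N) R)
          (Localization (Submonoid.powers
            (∏ i : Fin N, (MvPolynomial.X i : MvPolynomial (Fin N) R)))))
        (Ideal.map
          (algebraMap (MvPolynomial (Fin N) R)
            (Localization (Submonoid.powers
              (∏ i : Fin N, (MvPolynomial.X i : MvPolynomial (Fin N) R)))))
          (Ideal.span ((fun k => MvPolynomial.esymm (Fin N) R k) '' Set.Icc 1 (N - 1)))) =
      Ideal.span ((fun k => MvPolynomial.esymm (Fin N) R k) '' Set.Icc 1 (N - 1)) :=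
  stmt6_general R N
end

section
/- Let p be an odd prime, let R be a commutative F_p-algebra in which the image of ℤ → R is isomorphic to F_p (e.g. R nonzero with 1 ≠ 0 generating a copy of F_p), and let N ≥ 4 and a, b > 0 be integers with a + b = N. Suppose η̄, M ∈ R commute, M is invertible, and the following hold in R: (i) a(η̄ − M) + b(η̄ + M) = η̄; (ii) ∑_{j=0}^{k} C(a,j) C(b,k−j) (η̄ − M)^j (η̄ + M)^{k−j} = 0 for k = 2 and k = 3. Then η̄ = 0 and p divides each of N, a, and b in the sense that N·1_R = a·1_R = b·1_R = 0. -/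
lemma choose2_int (n : ℕ) : (n.choose 2 : ℤ) * 2 = n * (n - 1) := by
  induction n with
  | zero => simp
  | succ m ih =>
    rw [Nat.choose_succ_succ]
    push_cast [Nat.choose_one_right]
    push_cast at ih
    linarith

lemma choose3_int (n : ℕ) : (n.choose 3 : ℤ) * 6 = n * (n - 1) * (n - 2) := by
  induction n with
  | zero => simp
  | succ m ih =>
    have hc2 := choose2_int m
    rw [Nat.choose_succ_succ]
    push_cast
    push_cast at ih hc2
    linear_combination 3 * hc2 + ih

/-- the characteristic-`p` constraints forcing `η̄ = 0` and
`p ∣ N, a, b` in the closed–open map computation. -/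
theorem stmt17 (p : ℕ) (hp : p.Prime) (hodd : Odd p)
    (R : Type*) [CommRing R] [Algebra (ZMod p) R] [CharP R p]
    (N a b : ℕ) (hN : 4 ≤ N) (ha : 0 < a) (hb : 0 < b) (hab : a + b = N)
    (ηbar M : R) (hcomm : Commute ηbar M) (hM : IsUnit M)
    (h1 : (a : R) * (ηbar - M) + (b : R) * (ηbar + M) = ηbar)
    (h2 : ∀ k, k = 2 ∨ k = 3 →
      ∑ j ∈ Finset.range (k + 1),
        (a.choose j : R) * (b.choose (k - j) : R) * (ηbar - M) ^ j * (ηbar + M) ^ (k - j)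
        = 0) :
    ηbar = 0 ∧ (N : R) = 0 ∧ (a : R) = 0 ∧ (b : R) = 0 := by
  set u : R := (a : R) with hu
  set v : R := (b : R) with hv
  -- cast the choose identities into R
  have hu2 : (a.choose 2 : R) * 2 = u * (u - 1) := by
    have := congrArg (fun z : ℤ => (z : R)) (choose2_int a); push_cast at this
    simpa [hu] using this
  have hv2 : (b.choose 2 : R) * 2 = v * (v - 1) := by
    have := congrArg (fun z : ℤ => (z : R)) (choose2_int b); push_cast at this
    simpa [hv] using this
  have hu3 : (a.choose 3 : R) * 6 = u * (u - 1) * (u - 2) := by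
    have := congrArg (fun z : ℤ => (z : R)) (choose3_int a); push_cast at this
    simpa [hu] using this
  have hv3 : (b.choose 3 : R) * 6 = v * (v - 1) * (v - 2) := by
    have := congrArg (fun z : ℤ => (z : R)) (choose3_int b); push_cast at this
    simpa [hv] using this
  have E2 := h2 2 (Or.inl rfl)
  have E3 := h2 3 (Or.inr rfl)
  simp [Finset.sum_range_succ] at E2 E3
  -- S1 : (u+v-1) η = (u-v) M
  have S1 : (u + v - 1) * ηbar = (u - v) * M := by linear_combination h1
  -- S2 : (u+v-1) η² = (u+v) M²
  have S2 : (u + v - 1) * ηbar ^ 2 = (u + v) * M ^ 2 := by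
    linear_combination 2 * E2 - (ηbar + M) ^ 2 * hv2 - (ηbar - M) ^ 2 * hu2
      - ((u + v - 1) * ηbar - (u - v) * M) * S1
  -- S3 : 2 η M² = 0
  have S3 : 2 * ηbar * M ^ 2 = 0 := by
    linear_combination 6 * E3 - (ηbar + M) ^ 3 * hv3 - 3 * u * (ηbar - M) * (ηbar + M) ^ 2 * hv2
      - 3 * v * (ηbar - M) ^ 2 * (ηbar + M) * hu2 - (ηbar - M) ^ 3 * hu3
      + ((-2) * M ^ 2 - ηbar ^ 2 + 3 * v * M ^ 2 + 5 * v * ηbar * M + 2 * v * ηbar ^ 2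
        - v ^ 2 * M ^ 2 - 2 * v ^ 2 * ηbar * M - v ^ 2 * ηbar ^ 2
        + 3 * u * M ^ 2 - 5 * u * ηbar * M + 2 * u * ηbar ^ 2
        + 2 * u * v * M ^ 2 - 2 * u * v * ηbar ^ 2
        - u ^ 2 * M ^ 2 + 2 * u ^ 2 * ηbar * M - u ^ 2 * ηbar ^ 2) * S1
      + ηbar * S2
  haveI := Fact.mk hp
  have h2z : IsUnit (2 : ZMod p) := by
    refine isUnit_iff_ne_zero.2 fun h0 => ?_
    have h0' : ((2 : ℕ) : ZMod p) = 0 := by exact_mod_cast h0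
    have hdvd : p ∣ 2 := (ZMod.natCast_eq_zero_iff 2 p).1 h0'
    have := (Nat.prime_dvd_prime_iff_eq hp Nat.prime_two).1 hdvd
    rw [this] at hodd
    simp [Nat.odd_iff] at hodd
  have h2R : IsUnit (2 : R) := by
    have := h2z.map (algebraMap (ZMod p) R)
    simpa [map_ofNat] using this
  have hM2 : IsUnit (2 * M ^ 2 : R) := h2R.mul (hM.pow 2)
  have hη : ηbar = 0 := by
    have : (2 * M ^ 2) * ηbar = (2 * M ^ 2) * 0 := by linear_combination S3
    exact hM2.mul_left_cancel this
  subst hη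
  have huv : u = v := by
    have h : M * (u - v) = M * 0 := by linear_combination -S1
    have h' := hM.mul_left_cancel h
    exact sub_eq_zero.mp (by simpa using h')
  have hsum : u + v = 0 := by
    have : (M ^ 2) * (u + v) = (M ^ 2) * 0 := by linear_combination -S2
    simpa using (hM.pow 2).mul_left_cancel this
  have hu0 : u = 0 := by
    have : (2 : R) * u = (2 : R) * 0 := by linear_combination hsum + huv
    exact h2R.mul_left_cancel this
  have hv0 : v = 0 := by rw [← huv]; exact hu0
  have hN0 : (N : R) = 0 := by
    have : ((a + b : ℕ) : R) = (N : R) := by rw [hab]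
    push_cast at this
    rw [← this, ← hu, ← hv, hu0, hv0, add_zero]
  exact ⟨rfl, hN0, hu0, hv0⟩
end

section
/- Let R be a field and N ≥ 1. Then R[T_1, …, T_N] is a free module of rank N! over its subring R[e_1, …, e_N] generated by the elementary symmetric polynomials, and moreover e_1, …, e_N are algebraically independent over R. -/
/-!
Write `P = R[T_0, …, T_{N-1}]` and `A = R[e_1, …, e_N]`. Every `T_i` is a root of
`∏ j, (Y - T_j)`, a monic polynomial of degree `N` over `A`, and the elementary symmetric
polynomials `e'_k` of `T_1, …, T_{N-1}` lie in `A[T_0]` since `e_{k+1} = e'_{k+1} + T_0 e'_k`. By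
induction on `N`, the staircase monomials `T^d` with `d_i < N - i`, of which there are `N!`,
span `P` over `A`.

They are independent: `A` lies in the fixed field `L` of `S_N` acting on `K = Frac P`, and since
`P` is integral over `A`, every element of `K` is `c / a` with `c ∈ P` and `0 ≠ a ∈ A`. So the
staircase monomials span `K` over `L`, and as `[K : L] = N!` by Artin's theorem they form an
`L`-basis of `K`, hence are independent over `A`. Algebraic independence of the `e_k` is the
fundamental theorem of symmetric polynomials.
-/

open MvPolynomial

lemma Multiset.esymm_cons_succ {R : Type*} [CommSemiring R] (a : R) (s : Multiset R) (k : ℕ) :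
    (a ::ₘ s).esymm (k + 1) = s.esymm (k + 1) + a * s.esymm k := by
  simp [Multiset.esymm, Multiset.powersetCard_cons, Multiset.sum_map_mul_left]

theorem linearIndependent_of_span_eq_top_of_card_eq_finrank {A P K : Type*} [CommRing A]
    [CommRing P] [IsDomain P] [Field K] [Algebra A P] [Algebra P K] [Algebra A K]
    [IsScalarTower A P K] [IsFractionRing P K] [FaithfulSMul A P]
    (L : Subfield K) (hL : ∀ a : A, algebraMap A K a ∈ L)
    {ι : Type*} [Fintype ι] {b : ι → P} (hb : Submodule.span A (Set.range b) = ⊤)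
    (hcard : Fintype.card ι = Module.finrank L K) :
    LinearIndependent A b := by
  let toL (a : A) : L := ⟨algebraMap A K a, hL a⟩
  have hmap (g : ι → A) :
      algebraMap P K (∑ i, g i • b i) = ∑ i, toL (g i) • (algebraMap P K ∘ b) i := by
    simp [toL, Algebra.smul_def, IsScalarTower.algebraMap_apply A P K]
    rfl
  have : Module.Finite A P := ⟨hb ▸ Submodule.fg_span (Set.finite_range b)⟩
  have : Nontrivial A := Module.nontrivial A P
  have hspan : ⊤ ≤ Submodule.span L (Set.range (algebraMap P K ∘ b)) := by
    rintro x -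
    obtain ⟨p, q, hq, rfl⟩ := IsFractionRing.div_surjective (A := P) x
    obtain ⟨c, a, ha, hac⟩ :=
      (Algebra.IsIntegral.isIntegral (R := A) q).isAlgebraic.exists_smul_eq_mul p hq
    obtain ⟨g, rfl⟩ :=
      (Submodule.mem_span_range_iff_exists_fun A).mp (hb ▸ Submodule.mem_top : c ∈ _)
    have hq' : algebraMap P K q ≠ 0 := IsFractionRing.to_map_ne_zero_of_mem_nonZeroDivisors hq
    have ha' : algebraMap A K a ≠ 0 := by
      simpa [IsScalarTower.algebraMap_apply A P K] using ha
    have hdiv : algebraMap P K p / algebraMap P K q =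
        (toL a)⁻¹ • algebraMap P K (∑ i, g i • b i) := by
      have := congrArg (algebraMap P K) hac
      rw [Algebra.smul_def, map_mul, map_mul, ← IsScalarTower.algebraMap_apply] at this
      rw [Subfield.smul_def]
      simp only [toL, Subfield.coe_inv, smul_eq_mul]
      field_simp
      linear_combination this
    rw [hdiv, hmap]
    exact Submodule.smul_mem _ _ ((Submodule.mem_span_range_iff_exists_fun L).mpr ⟨_, rfl⟩)
  have hli := Fintype.linearIndependent_iff.mp
    (linearIndependent_of_top_le_span_of_card_eq_finrank hspan hcard)
  refine Fintype.linearIndependent_iff.mpr fun g hg i => ?_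
  have := congrArg Subtype.val (hli _ (by rw [← hmap, hg, map_zero]) i)
  simpa [toL, IsScalarTower.algebraMap_apply A P K] using this

namespace MvPolynomial

lemma esymm_fin_succ (R : Type*) [CommSemiring R] (n k : ℕ) :
    esymm (Fin (n + 1)) R (k + 1) =
      rename Fin.succ (esymm (Fin n) R (k + 1)) + X 0 * rename Fin.succ (esymm (Fin n) R k) := by
  simp only [esymm_eq_multiset_esymm, Fin.univ_succ, Finset.cons_val, Multiset.map_cons,
    Multiset.esymm_cons_succ, Finset.esymm_map_val, Finset.powersetCard_map, Finset.sum_map,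
    map_sum, map_prod, rename_X]
  simp [Finset.prod_map]

lemma monomial_cons_one (R : Type*) [CommSemiring R] {n : ℕ} (a : ℕ) (d : Fin n →₀ ℕ) :
    monomial (Finsupp.cons a d) (1 : R) = X 0 ^ a * rename Fin.succ (monomial d 1) := by
  rw [rename_monomial, X_pow_eq_monomial, monomial_mul, one_mul]
  congr 2
  ext i
  cases i using Fin.cases <;>
    simp [Finsupp.mapDomain_apply (Fin.succ_injective n), Finsupp.mapDomain_of_notMem_range]

lemma span_eq_top_of_monomial_mem {σ R A : Type*} [CommSemiring R] [CommSemiring A] [Algebra R A]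
    [Algebra A (MvPolynomial σ R)] [IsScalarTower R A (MvPolynomial σ R)]
    {M : Submodule A (MvPolynomial σ R)} (h : ∀ d, monomial d (1 : R) ∈ M) : M = ⊤ := by
  refine Submodule.restrictScalars_eq_top_iff R A _ |>.mp (eq_top_iff.mpr ?_)
  rw [← (basisMonomials σ R).span_eq, Submodule.span_le]
  rintro _ ⟨d, rfl⟩
  exact h d

lemma algebraicIndependent_esymm (σ R : Type*) [Fintype σ] [CommRing R] {n : ℕ}
    (hn : n ≤ Fintype.card σ) :
    AlgebraicIndependent R (fun k : Fin n => esymm σ R (k.1 + 1)) := by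
  have : aeval (fun k : Fin n => esymm σ R (k.1 + 1)) =
      (symmetricSubalgebra σ R).val.comp (esymmAlgHom σ R n) := by
    ext
    simp [esymmAlgHom]
  rw [AlgebraicIndependent, this]
  exact Subtype.val_injective.comp (esymmAlgHom_injective R hn)

noncomputable instance permMulSemiringAction (σ R : Type*) [CommSemiring R] :
    MulSemiringAction (Equiv.Perm σ) (MvPolynomial σ R) where
  smul e p := rename e p
  one_smul p := rename_id_apply p
  mul_smul e f p := (rename_rename f e p).symm
  smul_zero e := map_zero (rename e)
  smul_add e := map_add (rename e)
  smul_one e := map_one (rename e)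
  smul_mul e := map_mul (rename e)

lemma perm_smul_eq_rename {σ R : Type*} [CommSemiring R] (e : Equiv.Perm σ)
    (p : MvPolynomial σ R) : e • p = rename e p := rfl

instance {σ R : Type*} [CommSemiring R] [Nontrivial R] :
    FaithfulSMul (Equiv.Perm σ) (MvPolynomial σ R) :=
  ⟨fun h => Equiv.ext fun i =>
    X_injective (R := R) (by simpa [perm_smul_eq_rename] using h (X i))⟩

section FractionRing

variable {σ R : Type*} [CommRing R] [IsDomain R]

noncomputable instance : MulSemiringAction (Equiv.Perm σ) (FractionRing (MvPolynomial σ R)) :=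
  IsFractionRing.mulSemiringAction _ (MvPolynomial σ R) _

instance :
    SMulDistribClass (Equiv.Perm σ) (MvPolynomial σ R) (FractionRing (MvPolynomial σ R)) :=
  IsFractionRing.smulDistribClass _ _ _

lemma algebraMap_mem_fixedPoints_of_isSymmetric {p : MvPolynomial σ R} (hp : p.IsSymmetric) :
    algebraMap _ (FractionRing (MvPolynomial σ R)) p ∈
      FixedPoints.subfield (Equiv.Perm σ) (FractionRing (MvPolynomial σ R)) := fun e => by
  rw [← algebraMap.coe_smul', perm_smul_eq_rename, hp]

lemma finrank_fixedPoints_perm [Fintype σ] [DecidableEq σ] :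
    Module.finrank (FixedPoints.subfield (Equiv.Perm σ) (FractionRing (MvPolynomial σ R)))
      (FractionRing (MvPolynomial σ R)) = (Fintype.card σ).factorial := by
  have := IsFractionRing.faithfulSMul (Equiv.Perm σ) (MvPolynomial σ R)
    (FractionRing (MvPolynomial σ R))
  rw [FixedPoints.finrank_eq_card, Fintype.card_perm]

end FractionRing

end MvPolynomial

/-- In `0`-based indexing, `d i + i < n` is the condition `d_i < n - i`. -/
def staircase (n : ℕ) : Set (Fin n →₀ ℕ) := {d | ∀ i, d i + i < n}

lemma cons_mem_staircase_succ_iff {n a : ℕ} {d : Fin n →₀ ℕ} :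
    Finsupp.cons a d ∈ staircase (n + 1) ↔ a < n + 1 ∧ d ∈ staircase n := by
  simp only [staircase, Set.mem_ofPred_eq, Fin.forall_fin_succ, Finsupp.cons_zero,
    Finsupp.cons_succ, Fin.val_zero, Fin.val_succ]
  constructor <;> rintro ⟨h0, h⟩ <;> exact ⟨by omega, fun i => by have := h i; omega⟩

noncomputable def staircaseSuccEquiv (n : ℕ) :
    Fin (n + 1) × staircase n ≃ staircase (n + 1) where
  toFun x := ⟨Finsupp.cons x.1 x.2, cons_mem_staircase_succ_iff.mpr ⟨x.1.2, x.2.2⟩⟩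
  invFun d :=
    have hd := cons_mem_staircase_succ_iff.mp ((Finsupp.cons_tail d.1).symm ▸ d.2)
    ⟨⟨d.1 0, hd.1⟩, ⟨Finsupp.tail d.1, hd.2⟩⟩
  left_inv x := by simp
  right_inv d := by simp

lemma Nat.card_staircase (n : ℕ) : Nat.card (staircase n) = n.factorial := by
  induction n with
  | zero =>
    exact Nat.card_eq_one_iff_unique.mpr
      ⟨⟨fun _ _ => Subtype.ext (Subsingleton.elim _ _)⟩, ⟨⟨0, nofun⟩⟩⟩
  | succ n ih =>
    rw [← Nat.card_congr (staircaseSuccEquiv n), Nat.card_prod, ih, Nat.card_eq_fintype_card,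
      Fintype.card_fin, Nat.factorial_succ]

instance (n : ℕ) : Finite (staircase n) :=
  Nat.finite_of_card_ne_zero (Nat.card_staircase n ▸ Nat.factorial_ne_zero n)

section esymmSubalgebra

variable (R : Type*) [CommRing R] (n : ℕ)

noncomputable abbrev esymmSubalgebra : Subalgebra R (MvPolynomial (Fin n) R) :=
  Algebra.adjoin R (Set.range fun k : Fin n => esymm (Fin n) R (k.1 + 1))

variable {R n}

lemma esymm_mem_esymmSubalgebra {k : ℕ} (hk : k ≤ n) :
    esymm (Fin n) R k ∈ esymmSubalgebra R n := by
  cases k with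
  | zero => simp
  | succ k => exact Algebra.subset_adjoin ⟨⟨k, hk⟩, rfl⟩

lemma esymmSubalgebra_le_symmetricSubalgebra :
    esymmSubalgebra R n ≤ symmetricSubalgebra (Fin n) R :=
  Algebra.adjoin_le (Set.range_subset_iff.mpr fun _ => esymm_isSymmetric _ _ _)

variable (R n) in
/-- The polynomial is `∏ i, (Y - X i)`, whose coefficients are `± esymm`. -/
lemma exists_monic_aeval_X_eq_zero :
    ∃ q : Polynomial (esymmSubalgebra R n), q.Monic ∧ q.natDegree ≤ n ∧
      ∀ i : Fin n, Polynomial.aeval (X i : MvPolynomial (Fin n) R) q = 0 := by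
  set s : Multiset (MvPolynomial (Fin n) R) := Finset.univ.val.map X with hs
  set F := (s.map fun t => Polynomial.X - Polynomial.C t).prod
  have hcard : Multiset.card s = n := by simp [hs]
  have hF : F.Monic :=
    Polynomial.monic_multiset_prod_of_monic _ _ fun t _ => Polynomial.monic_X_sub_C t
  have hdeg : F.natDegree ≤ n := by
    nontriviality MvPolynomial (Fin n) R
    rw [Polynomial.natDegree_multiset_prod_X_sub_C_eq_card, hcard]
  have hlifts : F ∈ Polynomial.lifts (algebraMap (esymmSubalgebra R n) _) := by
    rw [Polynomial.lifts_iff_coeff_lifts]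
    intro k
    rcases le_or_gt k n with hk | hk
    · rw [Multiset.prod_X_sub_C_coeff s (by rw [hcard]; exact hk), hs, ← esymm_eq_multiset_esymm,
        hcard]
      exact ⟨⟨_, mul_mem (pow_mem (neg_mem (one_mem _)) _)
        (esymm_mem_esymmSubalgebra (Nat.sub_le n k))⟩, rfl⟩
    · exact ⟨0, by rw [map_zero, Polynomial.coeff_eq_zero_of_natDegree_lt (by omega)]⟩
  obtain ⟨q, hqF, hqdeg, hq⟩ := Polynomial.lifts_and_natDegree_eq_and_monic hlifts hF
  refine ⟨q, hq, hqdeg.trans_le hdeg, fun i => ?_⟩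
  rw [Polynomial.aeval_def, Polynomial.eval₂_eq_eval_map, hqF, Polynomial.eval_multiset_prod]
  exact Multiset.prod_eq_zero
    (Multiset.mem_map.mpr ⟨_, Multiset.mem_map.mpr ⟨X i, by simp [hs], rfl⟩, by simp⟩)

lemma toSubmodule_adjoin_X_le_span_pow (i : Fin n) :
    Subalgebra.toSubmodule
        (Algebra.adjoin (esymmSubalgebra R n) {(X i : MvPolynomial (Fin n) R)}) ≤
      Submodule.span (esymmSubalgebra R n) ((X i ^ ·) '' Set.Iio n) := by
  classical
  obtain ⟨q, hq, hdeg, hroot⟩ := exists_monic_aeval_X_eq_zero R n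
  rw [← Submodule.span_range_natDegree_eq_adjoin hq (hroot i)]
  refine Submodule.span_mono ?_
  simp only [Finset.coe_image, Finset.coe_range]
  exact Set.image_mono (Set.Iio_subset_Iio hdeg)

lemma rename_succ_mem_adjoin_X_zero {c : MvPolynomial (Fin n) R} (hc : c ∈ esymmSubalgebra R n) :
    rename Fin.succ c ∈ Algebra.adjoin (esymmSubalgebra R (n + 1)) {X 0} := by
  set B := Algebra.adjoin (esymmSubalgebra R (n + 1)) {(X 0 : MvPolynomial (Fin (n + 1)) R)}
  have hesymm : ∀ k ≤ n, rename Fin.succ (esymm (Fin n) R k) ∈ B := by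
    intro k
    induction k with
    | zero => simp
    | succ k ih =>
      intro hk
      rw [eq_sub_of_add_eq (esymm_fin_succ R n k).symm]
      refine sub_mem ?_ (mul_mem (Algebra.subset_adjoin rfl) (ih (by omega)))
      exact B.algebraMap_mem (⟨_, esymm_mem_esymmSubalgebra (k := k + 1) (by omega)⟩ :
        esymmSubalgebra R (n + 1))
  refine Algebra.adjoin_le (S := (B.restrictScalars R).comap (rename Fin.succ)) ?_ hc
  rintro _ ⟨k, rfl⟩
  exact hesymm _ k.2

lemma monomial_mem_span_staircase_succ
    (ih : Submodule.span (esymmSubalgebra R n)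
      (Set.range fun d : staircase n => monomial (d : Fin n →₀ ℕ) (1 : R)) = ⊤)
    (d : Fin (n + 1) →₀ ℕ) :
    monomial d (1 : R) ∈ Submodule.span (esymmSubalgebra R (n + 1))
      (Set.range fun d : staircase (n + 1) => monomial (d : Fin (n + 1) →₀ ℕ) (1 : R)) := by
  set A := esymmSubalgebra R (n + 1)
  set B := Algebra.adjoin A {(X 0 : MvPolynomial (Fin (n + 1)) R)}
  set W := Subalgebra.toSubmodule B * Submodule.span A
    (rename Fin.succ '' Set.range fun d : staircase n => monomial (d : Fin n →₀ ℕ) (1 : R))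
  have hW : W ≤ Submodule.span A
      (Set.range fun d : staircase (n + 1) => monomial (d : Fin (n + 1) →₀ ℕ) (1 : R)) := by
    refine (mul_le_mul' (toSubmodule_adjoin_X_le_span_pow 0) le_rfl).trans ?_
    rw [Submodule.span_mul_span, Submodule.span_le]
    rintro _ ⟨_, ⟨a, ha, rfl⟩, _, ⟨_, ⟨⟨e, he⟩, rfl⟩, rfl⟩, rfl⟩
    exact Submodule.subset_span
      ⟨⟨_, cons_mem_staircase_succ_iff.mpr ⟨ha, he⟩⟩, monomial_cons_one R a e⟩
  have mul_rename_mem (p : MvPolynomial (Fin n) R) : ∀ b ∈ B, b * rename Fin.succ p ∈ W := by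
    induction (ih ▸ Submodule.mem_top : p ∈ Submodule.span _ _)
      using Submodule.span_induction with
    | mem x hx =>
      exact fun b hb => Submodule.mul_mem_mul hb (Submodule.subset_span ⟨x, hx, rfl⟩)
    | zero => simp
    | add x y _ _ hx hy =>
      intro b hb
      rw [map_add, mul_add]
      exact add_mem (hx b hb) (hy b hb)
    | smul c x _ hx =>
      intro b hb
      rw [Subalgebra.smul_def, smul_eq_mul, map_mul, ← mul_assoc]
      exact hx _ (mul_mem hb (rename_succ_mem_adjoin_X_zero c.2))
  have hX : (X 0 : MvPolynomial (Fin (n + 1)) R) ^ d 0 ∈ B :=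
    pow_mem (Algebra.subset_adjoin (Set.mem_singleton _)) _
  have := mul_rename_mem (monomial (Finsupp.tail d) 1) _ hX
  rw [← monomial_cons_one, Finsupp.cons_tail] at this
  exact hW this

variable (R n)

theorem span_monomial_staircase_eq_top :
    Submodule.span (esymmSubalgebra R n)
      (Set.range fun d : staircase n => monomial (d : Fin n →₀ ℕ) (1 : R)) = ⊤ := by
  induction n with
  | zero =>
    exact span_eq_top_of_monomial_mem fun d => Submodule.subset_span ⟨⟨d, nofun⟩, rfl⟩
  | succ n ih => exact span_eq_top_of_monomial_mem (monomial_mem_span_staircase_succ ih)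

theorem linearIndependent_monomial_staircase [IsDomain R] :
    LinearIndependent (esymmSubalgebra R n)
      fun d : staircase n => monomial (d : Fin n →₀ ℕ) (1 : R) := by
  have := Fintype.ofFinite (staircase n)
  refine linearIndependent_of_span_eq_top_of_card_eq_finrank
    (FixedPoints.subfield (Equiv.Perm (Fin n)) (FractionRing (MvPolynomial (Fin n) R)))
    (fun a => ?_) (span_monomial_staircase_eq_top R n) ?_
  · rw [IsScalarTower.algebraMap_apply _ (MvPolynomial (Fin n) R)]
    exact algebraMap_mem_fixedPoints_of_isSymmetric (esymmSubalgebra_le_symmetricSubalgebra a.2)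
  · rw [finrank_fixedPoints_perm, ← Nat.card_eq_fintype_card, Nat.card_staircase,
      Fintype.card_fin]

end esymmSubalgebra

theorem stmt19_general (R : Type*) [Field R] (N : ℕ) :
    Nonempty (Module.Basis (Fin (Nat.factorial N))
      (Algebra.adjoin R (Set.range fun k : Fin N => MvPolynomial.esymm (Fin N) R (k.1 + 1)))
      (MvPolynomial (Fin N) R)) ∧
    AlgebraicIndependent R (fun k : Fin N => MvPolynomial.esymm (Fin N) R (k.1 + 1)) :=
  ⟨⟨(Module.Basis.mk (linearIndependent_monomial_staircase R N)
      (span_monomial_staircase_eq_top R N).ge).reindex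
      (Finite.equivFinOfCardEq (Nat.card_staircase N))⟩,
    algebraicIndependent_esymm (Fin N) R (Fintype.card_fin N).ge⟩

/-- over a field `R`, the polynomial ring `R[T_1,…,T_N]` is a free
module of rank `N!` over the subring generated by the elementary symmetric
polynomials, which are algebraically independent over `R`. -/
theorem stmt19 (R : Type*) [Field R] (N : ℕ) (hN : 1 ≤ N) :
    Nonempty (Module.Basis (Fin (Nat.factorial N))
      (Algebra.adjoin R (Set.range fun k : Fin N => MvPolynomial.esymm (Fin N) R (k.1 + 1)))
      (MvPolynomial (Fin N) R)) ∧
    AlgebraicIndependent R (fun k : Fin N => MvPolynomial.esymm (Fin N) R (k.1 + 1)) :=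
  stmt19_general R N
end
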